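/- Let γ ∈ [0,1), α ∈ [0,1], ε ∈ [0,1] and real constants k, k' with 0 ≤ k' ≤ k. Let (a_t), (a'_t), (b_t), (b'_t) be real sequences, all bounded in absolute value by k, such that for every t ≥ 0, |a'_t − a_t| ≤ 4α(1−(1−α)^t)·k and |b'_t − b_t| ≤ 4α(1−(1−α)^t)·k'. Then |(1−ε)·∑_{t=0}^∞ γ^t (a'_t − a_t) + ε·∑_{t=0}^∞ γ^t (b'_t − b_t)| ≤ (4α²γ/(1−γ)²)·(k(1−ε) + k'ε) ≤ 4α²γk/(1−γ)². -/

import Mathlib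

lemma key_bound (γ α k : ℝ)
    (hγ0 : 0 ≤ γ) (hγ1 : γ < 1)
    (hα0 : 0 ≤ α) (hα1 : α ≤ 1)
    (hk : 0 ≤ k)
    (f : ℕ → ℝ)
    (hf : ∀ t, |f t| ≤ 4 * α * (1 - (1 - α) ^ t) * k) :
    |∑' t : ℕ, γ ^ t * f t| ≤ 4 * α ^ 2 * γ / (1 - γ) ^ 2 * k := by
  set β := (1 - α) * γ with hβdef
  have hβ0 : 0 ≤ β := mul_nonneg (by linarith) hγ0
  have hβγ : β ≤ γ := by nlinarith
  have hβ1 : β < 1 := lt_of_le_of_lt hβγ hγ1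
  have h1γ : 0 < 1 - γ := by linarith
  have h1β : 0 < 1 - β := by linarith
  have hsumγ : Summable (fun t : ℕ => γ ^ t) := summable_geometric_of_lt_one hγ0 hγ1
  have hsumβ : Summable (fun t : ℕ => β ^ t) := summable_geometric_of_lt_one hβ0 hβ1
  have hg : ∀ t : ℕ, |γ ^ t * f t| ≤ 4 * α * k * (γ ^ t - β ^ t) := by
    intro t
    have h1 : |γ ^ t * f t| = γ ^ t * |f t| := by
      rw [abs_mul, abs_of_nonneg (pow_nonneg hγ0 t)]
    rw [h1]
    have hγt : (0:ℝ) ≤ γ ^ t := pow_nonneg hγ0 t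
    have hβt : β ^ t = (1 - α) ^ t * γ ^ t := mul_pow _ _ _
    calc γ ^ t * |f t| ≤ γ ^ t * (4 * α * (1 - (1 - α) ^ t) * k) :=
          mul_le_mul_of_nonneg_left (hf t) hγt
      _ = 4 * α * k * (γ ^ t - β ^ t) := by rw [hβt]; ring
  have hsumRHS : Summable (fun t : ℕ => 4 * α * k * (γ ^ t - β ^ t)) :=
    (hsumγ.sub hsumβ).mul_left _
  have hsumabs : Summable (fun t : ℕ => |γ ^ t * f t|) :=
    Summable.of_nonneg_of_le (fun t => abs_nonneg _) hg hsumRHS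
  have hsumg : Summable (fun t : ℕ => γ ^ t * f t) := hsumabs.of_abs
  have habs : |∑' t : ℕ, γ ^ t * f t| ≤ ∑' t : ℕ, |γ ^ t * f t| := by
    have hsn : Summable (fun t : ℕ => ‖γ ^ t * f t‖) := by
      simpa only [Real.norm_eq_abs] using hsumabs
    have := norm_tsum_le_tsum_norm hsn
    simpa only [Real.norm_eq_abs] using this
  have hle : (∑' t : ℕ, |γ ^ t * f t|) ≤ ∑' t : ℕ, 4 * α * k * (γ ^ t - β ^ t) :=
    Summable.tsum_le_tsum hg hsumabs hsumRHS
  have hval : (∑' t : ℕ, 4 * α * k * (γ ^ t - β ^ t))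
      = 4 * α * k * (1 / (1 - γ) - 1 / (1 - β)) := by
    rw [tsum_mul_left, Summable.tsum_sub hsumγ hsumβ,
      tsum_geometric_of_lt_one hγ0 hγ1, tsum_geometric_of_lt_one hβ0 hβ1,
      one_div, one_div]
  have hfin : 4 * α * k * (1 / (1 - γ) - 1 / (1 - β))
      ≤ 4 * α ^ 2 * γ / (1 - γ) ^ 2 * k := by
    have hdiff : 1 / (1 - γ) - 1 / (1 - β) = α * γ / ((1 - γ) * (1 - β)) := by
      rw [div_sub_div _ _ h1γ.ne' h1β.ne']
      congr 1
      rw [hβdef]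
      ring
    rw [hdiff]
    have heq : 4 * α * k * (α * γ / ((1 - γ) * (1 - β)))
        = (4 * α * k * (α * γ)) / ((1 - γ) * (1 - β)) := by ring
    have heq2 : 4 * α ^ 2 * γ / (1 - γ) ^ 2 * k = (4 * α ^ 2 * γ * k) / (1 - γ) ^ 2 := by
      ring
    rw [heq, heq2, div_le_div_iff₀ (by positivity) (by positivity)]
    have hγβ : γ - β = α * γ := by rw [hβdef]; ring
    have hkey : 0 ≤ 4 * α ^ 2 * γ * k * ((1 - γ) * (γ - β)) := by
      rw [hγβ]; positivity
    nlinarith [hkey]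
  calc |∑' t : ℕ, γ ^ t * f t| ≤ ∑' t : ℕ, |γ ^ t * f t| := habs
    _ ≤ ∑' t : ℕ, 4 * α * k * (γ ^ t - β ^ t) := hle
    _ = 4 * α * k * (1 / (1 - γ) - 1 / (1 - β)) := hval
    _ ≤ 4 * α ^ 2 * γ / (1 - γ) ^ 2 * k := hfin

/-- Algebraic core of Lemma 2 (ε-retrain bound for a mixed restart distribution). -/
theorem stmt_0 (γ α ε k k' : ℝ)
    (hγ0 : 0 ≤ γ) (hγ1 : γ < 1)
    (hα0 : 0 ≤ α) (hα1 : α ≤ 1)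
    (hε0 : 0 ≤ ε) (hε1 : ε ≤ 1)
    (hk'0 : 0 ≤ k') (hk'k : k' ≤ k)
    (a a' b b' : ℕ → ℝ)
    (ha : ∀ t, |a t| ≤ k) (ha' : ∀ t, |a' t| ≤ k)
    (hb : ∀ t, |b t| ≤ k) (hb' : ∀ t, |b' t| ≤ k)
    (hda : ∀ t, |a' t - a t| ≤ 4 * α * (1 - (1 - α) ^ t) * k)
    (hdb : ∀ t, |b' t - b t| ≤ 4 * α * (1 - (1 - α) ^ t) * k') :
    |(1 - ε) * (∑' t : ℕ, γ ^ t * (a' t - a t))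
      + ε * (∑' t : ℕ, γ ^ t * (b' t - b t))|
        ≤ (4 * α ^ 2 * γ / (1 - γ) ^ 2) * (k * (1 - ε) + k' * ε)
      ∧ (4 * α ^ 2 * γ / (1 - γ) ^ 2) * (k * (1 - ε) + k' * ε)
        ≤ 4 * α ^ 2 * γ * k / (1 - γ) ^ 2 := by
  have hk0 : 0 ≤ k := le_trans hk'0 hk'k
  have hC : 0 ≤ 4 * α ^ 2 * γ / (1 - γ) ^ 2 := by positivity
  have hX := key_bound γ α k hγ0 hγ1 hα0 hα1 hk0 (fun t => a' t - a t) hda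
  have hY := key_bound γ α k' hγ0 hγ1 hα0 hα1 hk'0 (fun t => b' t - b t) hdb
  set X := ∑' t : ℕ, γ ^ t * (a' t - a t) with hXdef
  set Y := ∑' t : ℕ, γ ^ t * (b' t - b t) with hYdef
  constructor
  · have h1 : |(1 - ε) * X + ε * Y| ≤ (1 - ε) * |X| + ε * |Y| := by
      calc |(1 - ε) * X + ε * Y| ≤ |(1 - ε) * X| + |ε * Y| := abs_add_le _ _
        _ = (1 - ε) * |X| + ε * |Y| := by
            rw [abs_mul, abs_mul, abs_of_nonneg (by linarith : (0:ℝ) ≤ 1 - ε),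
              abs_of_nonneg hε0]
    have h2 : (1 - ε) * |X| ≤ (1 - ε) * (4 * α ^ 2 * γ / (1 - γ) ^ 2 * k) :=
      mul_le_mul_of_nonneg_left hX (by linarith)
    have h3 : ε * |Y| ≤ ε * (4 * α ^ 2 * γ / (1 - γ) ^ 2 * k') :=
      mul_le_mul_of_nonneg_left hY hε0
    calc |(1 - ε) * X + ε * Y| ≤ (1 - ε) * |X| + ε * |Y| := h1
      _ ≤ (1 - ε) * (4 * α ^ 2 * γ / (1 - γ) ^ 2 * k)
          + ε * (4 * α ^ 2 * γ / (1 - γ) ^ 2 * k') := add_le_add h2 h3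
      _ = (4 * α ^ 2 * γ / (1 - γ) ^ 2) * (k * (1 - ε) + k' * ε) := by ring
  · have : k * (1 - ε) + k' * ε ≤ k := by nlinarith
    calc (4 * α ^ 2 * γ / (1 - γ) ^ 2) * (k * (1 - ε) + k' * ε)
        ≤ (4 * α ^ 2 * γ / (1 - γ) ^ 2) * k := mul_le_mul_of_nonneg_left this hC
      _ = 4 * α ^ 2 * γ * k / (1 - γ) ^ 2 := by ring
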